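/- arXiv:math/0411166 — 4 statements merged into one kernel-verified Lean document; each statement's English description precedes it below -/
import Mathlib

section
/- The class of 1-counter languages is not closed under concatenation: the language C = { a^n b^n : n ∈ ℕ } over {a, b} is 1-counter, but the concatenation C·C = { a^m b^m a^n b^n : m, n ∈ ℕ } is not 1-counter. -/
/-- A `ℤ^k`-automaton over alphabet `A`: a finite directed graph with states
`Fin n`, a start state, accept states, and finitely many edges labelled by
pairs `(x, g)` with `x ∈ A ∪ {ε}` (modelled as `Option A`) and `g ∈ ℤ^k`. -/
structure ZkAut (A : Type) (k : ℕ) where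
  n : ℕ
  start : Fin n
  accept : Fin n → Prop
  edges : List (Fin n × (Option A × (Fin k → ℤ)) × Fin n)

/-- `M.Path p q w g` : there is a directed path from `p` to `q` whose edge
labels read the word `w` and sum to `g` in `ℤ^k`. -/
inductive ZkAut.Path {A : Type} {k : ℕ} (M : ZkAut A k) :
    Fin M.n → Fin M.n → List A → (Fin k → ℤ) → Prop
  | nil (q : Fin M.n) : ZkAut.Path M q q [] 0
  | cons {p q r : Fin M.n} {x : Option A} {g : Fin k → ℤ} {w : List A} {h : Fin k → ℤ} :
      (p, (x, g), q) ∈ M.edges → ZkAut.Path M q r w h →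
      ZkAut.Path M p r (x.toList ++ w) (g + h)

/-- The automaton accepts `w` if some path from the start state to an accept
state reads `w` with total counter value `0 ∈ ℤ^k`. -/
def ZkAut.Accepts {A : Type} {k : ℕ} (M : ZkAut A k) (w : List A) : Prop :=
  ∃ q : Fin M.n, M.accept q ∧ M.Path M.start q w 0

/-- A language is `k`-counter if it is the set of words accepted by some
`ℤ^k`-automaton. -/
def IsCounterLang {A : Type} (k : ℕ) (L : Language A) : Prop :=
  ∃ M : ZkAut A k, ∀ w : List A, w ∈ L ↔ M.Accepts w

/-!
Suppose a `ℤ`-automaton with `n` states accepts `C·C`, and follow an accepting run on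
`a^N b^N a^N b^N` with `N` large. Inside each of the four blocks the run passes through a cycle
reading a nonempty power of the block's letter. Pumping a cycle of the first half together with a
cycle of the second half, with multiplicities that keep the total weight zero, yields an accepted
word whose halves are not both balanced unless both pumped words are empty. Hence all cycles met
inside the blocks have weights of one common sign `σ`, strictly so for cycles reading letters.
Loop erasure then bounds the weight of each block from below, in the direction `σ`, by roughly
`N / n` minus a constant, so the four blocks cannot add up to weight zero.
-/

open List

namespace ZkAut

variable {A : Type} {k : ℕ} (M : ZkAut A k)

abbrev Edge := Fin M.n × (Option A × (Fin k → ℤ)) × Fin M.n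

def IsTrace : Fin M.n → List M.Edge → Prop
  | _, [] => True
  | p, e :: T => e ∈ M.edges ∧ e.1 = p ∧ IsTrace e.2.2 T

variable {M}

def target (p : Fin M.n) (T : List M.Edge) : Fin M.n := T.foldl (fun _ e => e.2.2) p

def word (T : List M.Edge) : List A := T.flatMap fun e => e.2.1.1.toList

def weight (T : List M.Edge) : Fin k → ℤ := (T.map fun e => e.2.1.2).sum

@[simp] theorem isTrace_nil (p : Fin M.n) : M.IsTrace p [] := trivial

@[simp] theorem isTrace_cons (p : Fin M.n) (e : M.Edge) (T : List M.Edge) :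
    M.IsTrace p (e :: T) ↔ e ∈ M.edges ∧ e.1 = p ∧ M.IsTrace e.2.2 T := Iff.rfl

@[simp] theorem target_nil (p : Fin M.n) : target p ([] : List M.Edge) = p := rfl

@[simp] theorem target_cons (p : Fin M.n) (e : M.Edge) (T : List M.Edge) :
    target p (e :: T) = target e.2.2 T := rfl

@[simp] theorem target_append (p : Fin M.n) (U V : List M.Edge) :
    target p (U ++ V) = target (target p U) V := List.foldl_append

@[simp] theorem isTrace_append {p : Fin M.n} {U V : List M.Edge} :
    M.IsTrace p (U ++ V) ↔ M.IsTrace p U ∧ M.IsTrace (target p U) V := by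
  induction U generalizing p with
  | nil => simp
  | cons e U ih => simp [ih, and_assoc]

@[simp] theorem word_nil : word ([] : List M.Edge) = [] := rfl

@[simp] theorem word_cons (e : M.Edge) (T : List M.Edge) :
    word (e :: T) = e.2.1.1.toList ++ word T := rfl

@[simp] theorem word_append (U V : List M.Edge) : word (U ++ V) = word U ++ word V :=
  List.flatMap_append

@[simp] theorem weight_nil : weight ([] : List M.Edge) = 0 := rfl

@[simp] theorem weight_cons (e : M.Edge) (T : List M.Edge) :
    weight (e :: T) = e.2.1.2 + weight T := by
  simp [weight]

@[simp] theorem weight_append (U V : List M.Edge) : weight (U ++ V) = weight U + weight V := by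
  simp [weight]

theorem length_word_le (T : List M.Edge) : (word T).length ≤ T.length := by
  induction T with
  | nil => simp
  | cons e T ih => rcases e with ⟨_, ⟨_ | _, _⟩, _⟩ <;> simp <;> omega

theorem path_iff_exists_trace {p q : Fin M.n} {w : List A} {g : Fin k → ℤ} :
    M.Path p q w g ↔ ∃ T, M.IsTrace p T ∧ target p T = q ∧ word T = w ∧ weight T = g := by
  constructor
  · intro h
    induction h with
    | nil q => exact ⟨[], trivial, rfl, rfl, rfl⟩
    | @cons p q r x g w h he _ ih =>
      obtain ⟨T, hT, rfl, rfl, rfl⟩ := ih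
      exact ⟨(p, (x, g), q) :: T, ⟨he, rfl, hT⟩, rfl, rfl, by simp⟩
  · rintro ⟨T, hT, rfl, rfl, rfl⟩
    induction T generalizing p with
    | nil => simpa using Path.nil p
    | cons e T ih =>
      obtain ⟨he, rfl, hT⟩ := hT
      simpa using Path.cons he (ih hT)

theorem Path.single {p q : Fin M.n} {x : Option A} {g : Fin k → ℤ}
    (he : (p, (x, g), q) ∈ M.edges) : M.Path p q x.toList g := by
  simpa using Path.cons he (Path.nil q)

theorem Path.append {p q r : Fin M.n} {u v : List A} {g h : Fin k → ℤ} (huv : M.Path p q u g)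
    (hvw : M.Path q r v h) : M.Path p r (u ++ v) (g + h) := by
  induction huv with
  | nil => simpa using hvw
  | cons he _ ih => simpa [add_assoc] using Path.cons he (ih hvw)

theorem Path.exists_split {p q : Fin M.n} {u v : List A} {g : Fin k → ℤ}
    (h : M.Path p q (u ++ v) g) :
    ∃ s g₁ g₂, M.Path p s u g₁ ∧ M.Path s q v g₂ ∧ g = g₁ + g₂ := by
  generalize huv : u ++ v = w at h
  induction h generalizing u with
  | nil q =>
    obtain ⟨rfl, rfl⟩ := List.append_eq_nil_iff.1 huv
    exact ⟨q, 0, 0, Path.nil q, Path.nil q, by simp⟩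
  | @cons p q r x g w h he hrest ih =>
    cases x with
    | none =>
      obtain ⟨s, g₁, g₂, h₁, h₂, rfl⟩ := ih huv
      exact ⟨s, g + g₁, g₂, by simpa using Path.cons he h₁, h₂, (add_assoc _ _ _).symm⟩
    | some y =>
      cases u with
      | nil =>
        rw [List.nil_append] at huv
        exact ⟨p, 0, g + h, Path.nil p, by simpa [huv] using Path.cons he hrest, by simp⟩
      | cons z u =>
        obtain ⟨rfl, hw⟩ := List.cons_eq_cons.1 huv
        obtain ⟨s, g₁, g₂, h₁, h₂, rfl⟩ := ih hw
        exact ⟨s, g + g₁, g₂, by simpa using Path.cons he h₁, h₂, (add_assoc _ _ _).symm⟩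

theorem Path.replicate_mul {v : Fin M.n} {x : A} {l : ℕ} {c : Fin k → ℤ}
    (h : M.Path v v (replicate l x) c) (t : ℕ) : M.Path v v (replicate (t * l) x) (t • c) := by
  induction t with
  | zero => simpa using Path.nil v
  | succ t ih =>
    rw [Nat.succ_mul, List.replicate_add, succ_nsmul]
    exact ih.append h

theorem exists_cycle_of_lt_length (p : Fin M.n) {R : List M.Edge} (hR : M.n < R.length) :
    ∃ U C V, R = U ++ C ++ V ∧ C ≠ [] ∧ C.length ≤ M.n ∧ target (target p U) C = target p U := by
  suffices key : ∀ i j : Fin (M.n + 1), i < j → target p (R.take i) = target p (R.take j) →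
      ∃ U C V, R = U ++ C ++ V ∧ C ≠ [] ∧ C.length ≤ M.n ∧
        target (target p U) C = target p U by
    obtain ⟨i, j, hij, heq⟩ :=
      Fintype.exists_ne_map_eq_of_card_lt (fun j : Fin (M.n + 1) => target p (R.take j)) (by simp)
    rcases lt_or_gt_of_ne hij with h | h
    · exact key i j h heq
    · exact key j i h heq.symm
  intro i j hij heq
  have hj : (j : ℕ) ≤ R.length := by omega
  have htake : R.take j = R.take i ++ (R.take j).drop i := by
    conv_lhs => rw [← List.take_append_drop i (R.take j)]
    rw [List.take_take, Nat.min_eq_left (by omega)]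
  refine ⟨R.take i, (R.take j).drop i, R.drop j, ?_, ?_, ?_, ?_⟩
  · rw [← htake, List.take_append_drop]
  · rw [← List.length_pos_iff]; simp; omega
  · simp; omega
  · rw [← target_append, ← htake, heq]

theorem le_of_forall_cycle_nonpos (E : M.Edge → Prop) (Ψ : List M.Edge → ℤ) (D : ℤ)
    (hΨ : ∀ U V, Ψ (U ++ V) = Ψ U + Ψ V)
    (hshort : ∀ p R, M.IsTrace p R → R.length ≤ M.n → Ψ R ≤ D)
    (hcycle : ∀ v C, M.IsTrace v C → target v C = v → C ≠ [] → C.length ≤ M.n →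
      (∀ e ∈ C, E e) → Ψ C ≤ 0)
    {p : Fin M.n} {R : List M.Edge} (hR : M.IsTrace p R) (hE : ∀ e ∈ R, E e) : Ψ R ≤ D := by
  induction hn : R.length using Nat.strong_induction_on generalizing R with
  | _ n ih =>
  by_cases hlen : R.length ≤ M.n
  · exact hshort p R hR hlen
  obtain ⟨U, C, V, rfl, hC, hCn, hcyc⟩ := exists_cycle_of_lt_length p (not_le.1 hlen)
  simp only [isTrace_append, target_append, hcyc] at hR
  have hUV : Ψ (U ++ V) ≤ D :=
    ih _ (by simp at hn ⊢; have := List.length_pos_iff.2 hC; omega)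
      (isTrace_append.2 ⟨hR.1.1, hR.2⟩) (fun e he => hE e (by simp at he ⊢; tauto)) rfl
  have hCΨ : Ψ C ≤ 0 := hcycle _ C hR.1.2 hcyc hC hCn (fun e he => hE e (by simp [he]))
  calc Ψ (U ++ C ++ V) = Ψ (U ++ V) + Ψ C := by simp only [hΨ]; ring
    _ ≤ D := by linarith

variable (M) in
/-- The path `p → q` reading `x ^ N` with weight `g` passes through a state carrying a cycle
that reads `x ^ l` with weight `c`, so that the cycle can be pumped into it. -/
def IsPumpable (p q : Fin M.n) (x : A) (N : ℕ) (g c : Fin k → ℤ) (l : ℕ) : Prop :=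
  ∃ v a b g₁ g₂, a + b = N ∧ g₁ + g₂ = g ∧ M.Path p v (replicate a x) g₁ ∧
    M.Path v v (replicate l x) c ∧ M.Path v q (replicate b x) g₂

theorem IsPumpable.path {p q : Fin M.n} {x : A} {N l : ℕ} {g c : Fin k → ℤ}
    (h : M.IsPumpable p q x N g c l) (t : ℕ) :
    M.Path p q (replicate (N + t * l) x) (g + t • c) := by
  obtain ⟨v, a, b, g₁, g₂, rfl, rfl, h₁, hc, h₂⟩ := h
  have hpath := (h₁.append (hc.replicate_mul t)).append h₂
  rwa [← List.replicate_add, ← List.replicate_add, add_right_comm, add_right_comm g₁] at hpath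

theorem isPumpable_of_cycle {p v : Fin M.n} {x : A} {N : ℕ} {S C : List M.Edge}
    (hS : M.IsTrace p S) (hSw : word S = replicate N x) (hC : M.IsTrace v C)
    (hCv : target v C = v) (hCne : C ≠ []) (hCS : ∀ e ∈ C, e ∈ S) :
    M.IsPumpable p (target p S) x N (weight S) (weight C) (word C).length := by
  obtain ⟨e, C', rfl⟩ := List.exists_cons_of_ne_nil hCne
  obtain ⟨P, Q, rfl⟩ := List.append_of_mem (hCS e (List.mem_cons_self ..))
  have hv : target p P = v := by
    have := (isTrace_append.1 hS).2
    simp only [isTrace_cons] at this hC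
    rw [← this.2.1, hC.2.1]
  obtain ⟨hlen, hP, hQ⟩ := List.append_eq_replicate_iff.1 ((word_append _ _).symm.trans hSw)
  have hCx : word (e :: C') = replicate (word (e :: C')).length x := by
    refine List.eq_replicate_iff.2 ⟨rfl, fun y hy => ?_⟩
    obtain ⟨f, hf, hyf⟩ := List.mem_flatMap.1 hy
    have : y ∈ word (P ++ e :: Q) := List.mem_flatMap.2 ⟨f, hCS f hf, hyf⟩
    rw [hSw] at this
    exact List.eq_of_mem_replicate this
  refine ⟨v, _, _, weight P, weight (e :: Q), hlen, (weight_append _ _).symm, ?_, ?_, ?_⟩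
  · rw [← hP, ← hv]; exact path_iff_exists_trace.2 ⟨P, (isTrace_append.1 hS).1, rfl, rfl, rfl⟩
  · rw [← hCx]; exact path_iff_exists_trace.2 ⟨_, hC, hCv, rfl, rfl⟩
  · rw [← hQ, ← hv, target_append]
    exact path_iff_exists_trace.2 ⟨_, (isTrace_append.1 hS).2, rfl, rfl, rfl⟩

theorem Path.exists_isPumpable {p q : Fin M.n} {x : A} {N : ℕ} {g : Fin k → ℤ}
    (h : M.Path p q (replicate N x) g) (hN : M.n < N) :
    ∃ c l, 0 < l ∧ M.IsPumpable p q x N g c l := by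
  obtain ⟨S, hS, rfl, hSw, rfl⟩ := path_iff_exists_trace.1 h
  by_contra! hno
  have hle : ((word S).length : ℤ) ≤ M.n :=
    le_of_forall_cycle_nonpos (· ∈ S) (fun R => ((word R).length : ℤ)) M.n
      (fun U V => by simp)
      (fun _ R _ hR => by have := length_word_le R; omega)
      (fun v C hC hCv hCne _ hCS => by
        have := Nat.eq_zero_of_not_pos fun hl =>
          hno _ _ hl (isPumpable_of_cycle hS hSw hC hCv hCne hCS)
        omega)
      hS (fun _ h => h)
  rw [hSw, List.length_replicate] at hle
  omega

variable (M) in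
theorem exists_abs_weight_le (i : Fin k) : ∃ B : ℕ, ∀ e ∈ M.edges, |e.2.1.2 i| ≤ B := by
  refine ⟨(M.edges.map fun e => (e.2.1.2 i).natAbs).sum, fun e he => ?_⟩
  rw [Int.abs_eq_natAbs]
  exact_mod_cast List.le_sum_of_mem (List.mem_map_of_mem (f := fun e => (e.2.1.2 i).natAbs) he)

theorem abs_weight_le {i : Fin k} {B : ℕ} (hB : ∀ e ∈ M.edges, |e.2.1.2 i| ≤ B) {p : Fin M.n}
    {R : List M.Edge} (hR : M.IsTrace p R) : |weight R i| ≤ B * R.length := by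
  induction R generalizing p with
  | nil => simp
  | cons e R ih =>
    obtain ⟨he, -, hR⟩ := hR
    calc |weight (e :: R) i| ≤ |e.2.1.2 i| + |weight R i| := by simpa using abs_add_le _ _
      _ ≤ B + B * R.length := add_le_add (hB e he) (ih hR)
      _ = B * (e :: R).length := by simp; ring

theorem Path.le_of_isPumpable {p q : Fin M.n} {x : A} {N : ℕ} {g : Fin k → ℤ}
    (h : M.Path p q (replicate N x) g) {i : Fin k} {σ : ℤ} (hσ : |σ| ≤ 1) {B : ℕ}
    (hB : ∀ e ∈ M.edges, |e.2.1.2 i| ≤ B)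
    (hsign : ∀ c l, M.IsPumpable p q x N g c l → 0 ≤ σ * c i ∧ (0 < l → 0 < σ * c i)) :
    (N : ℤ) ≤ M.n * (σ * g i) + M.n * (M.n * B + 1) := by
  obtain ⟨S, hS, rfl, hSw, rfl⟩ := path_iff_exists_trace.1 h
  have key := le_of_forall_cycle_nonpos (· ∈ S)
    (fun R => ((word R).length : ℤ) - M.n * (σ * weight R i)) (M.n * (M.n * B + 1))
    (fun U V => by simp; ring)
    (fun _ R hR hRn => by
      have hword : ((word R).length : ℤ) ≤ M.n := by have := length_word_le R; omega
      have hσw : -(σ * weight R i) ≤ B * M.n := calc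
        -(σ * weight R i) ≤ |σ| * |weight R i| := by rw [← abs_mul]; exact neg_le_abs _
        _ ≤ |weight R i| := mul_le_of_le_one_left (abs_nonneg _) hσ
        _ ≤ B * R.length := abs_weight_le hB hR
        _ ≤ B * M.n := by gcongr
      nlinarith)
    (fun v C hC hCv hCne hCn hCS => by
      obtain ⟨h0, hpos⟩ := hsign _ _ (isPumpable_of_cycle hS hSw hC hCv hCne hCS)
      have hword : ((word C).length : ℤ) ≤ M.n := by have := length_word_le C; omega
      rcases Nat.eq_zero_or_pos (word C).length with hl | hl
      · rw [hl]; push_cast; nlinarith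
      · have := hpos hl; nlinarith)
    hS (fun _ h => h)
  rw [hSw, List.length_replicate] at key
  linarith

end ZkAut

theorem List.replicate_append_replicate_inj {α : Type*} {x y : α} (hxy : x ≠ y) {a a' b b' : ℕ}
    (hb : 0 < b) (hb' : 0 < b') {l l' : List α}
    (h : replicate a x ++ (replicate b y ++ l) = replicate a' x ++ (replicate b' y ++ l')) :
    a = a' ∧ replicate b y ++ l = replicate b' y ++ l' := by
  obtain ⟨b, rfl⟩ := Nat.exists_eq_add_of_lt hb
  obtain ⟨b', rfl⟩ := Nat.exists_eq_add_of_lt hb'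
  simp only [Nat.zero_add, replicate_succ, cons_append] at h ⊢
  induction a generalizing a' with
  | zero =>
    cases a' with
    | zero => simpa using h
    | succ a' => exact absurd (List.cons_eq_cons.1 h).1.symm hxy
  | succ a ih =>
    cases a' with
    | zero => exact absurd (List.cons_eq_cons.1 h).1 hxy
    | succ a' =>
      obtain ⟨ha, hl⟩ := ih (List.cons_eq_cons.1 h).2
      exact ⟨congrArg (· + 1) ha, hl⟩

def anbn : Language (Fin 2) := {w | ∃ n : ℕ, w = replicate n 0 ++ replicate n 1}

theorem mem_anbn_mul_anbn_iff {a b c d : ℕ} (hb : 0 < b) (hc : 0 < c) :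
    replicate a 0 ++ replicate b 1 ++ replicate c 0 ++ replicate d 1 ∈ anbn * anbn ↔
      a = b ∧ c = d := by
  constructor
  · rintro ⟨_, ⟨m, rfl⟩, _, ⟨n, rfl⟩, h⟩
    simp only [List.append_assoc] at h
    have hunsorted : ¬ (replicate a (0 : Fin 2) ++ (replicate b 1 ++ (replicate c 0 ++
        replicate d 1))).Pairwise (· ≤ ·) := by
      simp [List.pairwise_append, hb.ne', hc.ne']
    rcases Nat.eq_zero_or_pos m with rfl | hm
    · rw [← h] at hunsorted
      exact (hunsorted (by simp [List.pairwise_append])).elim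
    rcases Nat.eq_zero_or_pos n with rfl | hn
    · rw [← h] at hunsorted
      exact (hunsorted (by simp [List.pairwise_append])).elim
    obtain ⟨rfl, h₁⟩ :=
      List.replicate_append_replicate_inj (x := (0 : Fin 2)) (y := 1) (by decide) hm hb h
    obtain ⟨rfl, h₂⟩ :=
      List.replicate_append_replicate_inj (x := (1 : Fin 2)) (y := 0) (by decide) hn hc h₁
    have hcount := congrArg (List.count 1) h₂
    have hlen := congrArg List.length h₂
    simp [List.count_replicate] at hcount hlen
    omega
  · rintro ⟨rfl, rfl⟩
    exact ⟨_, ⟨a, rfl⟩, _, ⟨c, rfl⟩, by simp⟩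

theorem Int.exists_nat_mul_add_mul_eq_zero {c c' : ℤ} (h : c * c' < 0) :
    ∃ t t' : ℕ, 0 < t ∧ 0 < t' ∧ t * c + t' * c' = 0 := by
  refine ⟨c'.natAbs, c.natAbs, by simp; rintro rfl; simp at h, by simp; rintro rfl; simp at h, ?_⟩
  rcases mul_neg_iff.1 h with ⟨hc, hc'⟩ | ⟨hc, hc'⟩
  · rw [Int.natCast_natAbs, Int.natCast_natAbs, abs_of_pos hc, abs_of_neg hc']; ring
  · rw [Int.natCast_natAbs, Int.natCast_natAbs, abs_of_neg hc, abs_of_pos hc']; ring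

theorem exists_sign_of_pumping {P Q : ℤ → ℕ → Prop}
    (hpump : ∀ c l c' l', P c l → Q c' l' → ∀ t t' : ℕ, t * c + t' * c' = 0 →
      t * l = 0 ∧ t' * l' = 0)
    {c₀ c₁ : ℤ} {l₀ l₁ : ℕ} (h₀ : P c₀ l₀) (hl₀ : 0 < l₀) (h₁ : Q c₁ l₁) (hl₁ : 0 < l₁) :
    ∃ σ : ℤ, |σ| = 1 ∧ ∀ c l, P c l ∨ Q c l → 0 ≤ σ * c ∧ (0 < l → 0 < σ * c) := by
  have hpair : ∀ c l c' l', P c l → Q c' l' →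
      (0 < l → c ≠ 0) ∧ (0 < l' → c' ≠ 0) ∧ (0 < l ∨ 0 < l' → 0 ≤ c * c') := by
    intro c l c' l' h h'
    refine ⟨fun hl hc => ?_, fun hl hc => ?_, fun hl => ?_⟩
    · have := (hpump c l c' l' h h' 1 0 (by simp [hc])).1; omega
    · have := (hpump c l c' l' h h' 0 1 (by simp [hc])).2; omega
    · by_contra! hneg
      obtain ⟨t, t', ht, ht', heq⟩ := Int.exists_nat_mul_add_mul_eq_zero hneg
      obtain ⟨h1, h2⟩ := hpump c l c' l' h h' t t' heq
      simp [ht.ne', ht'.ne'] at h1 h2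
      omega
  obtain ⟨hc₀, hc₁, h01⟩ := hpair _ _ _ _ h₀ h₁
  set σ := Int.sign c₀
  have hσ : |σ| = 1 := Int.abs_sign_of_ne_zero (hc₀ hl₀)
  have hσ0 : σ ≠ 0 := by rintro h; simp [h] at hσ
  have hσσ : σ * σ = 1 := by rw [← abs_mul_abs_self, hσ, one_mul]
  have htransfer : ∀ a b, 0 < σ * a → 0 ≤ a * b → 0 ≤ σ * b ∧ (b ≠ 0 → 0 < σ * b) := by
    intro a b ha hab
    have hb : 0 ≤ σ * b := by nlinarith
    exact ⟨hb, fun hb0 => lt_of_le_of_ne hb (mul_ne_zero hσ0 hb0).symm⟩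
  have hσc₀ : 0 < σ * c₀ := by
    rw [Int.sign_mul_self_eq_abs]; exact abs_pos.2 (hc₀ hl₀)
  have hσc₁ : 0 < σ * c₁ := (htransfer c₀ c₁ hσc₀ (h01 (Or.inl hl₀))).2 (hc₁ hl₁)
  refine ⟨σ, hσ, fun c l hcl => ?_⟩
  rcases hcl with h | h
  · obtain ⟨hne, -, hnn⟩ := hpair _ _ _ _ h h₁
    obtain ⟨h1, h2⟩ := htransfer c₁ c hσc₁ (by rw [mul_comm]; exact hnn (Or.inr hl₁))
    exact ⟨h1, fun hl => h2 (hne hl)⟩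
  · obtain ⟨-, hne, hnn⟩ := hpair _ _ _ _ h₀ h
    obtain ⟨h1, h2⟩ := htransfer c₀ c hσc₀ (hnn (Or.inl hl₀))
    exact ⟨h1, fun hl => h2 (hne hl)⟩

abbrev anbnAut : ZkAut (Fin 2) 1 where
  n := 2
  start := 0
  accept := (· = 1)
  edges := [(0, (some 0, 1), 0), (0, (none, 0), 1), (1, (some 1, -1), 1)]

theorem exists_replicate_of_anbnAut_path {p q : Fin anbnAut.n} {w : List (Fin 2)}
    {g : Fin 1 → ℤ} (h : anbnAut.Path p q w g) :
    ∃ m k : ℕ, w = replicate m 0 ++ replicate k 1 ∧ g 0 = m - k ∧ (p = 1 → m = 0) := by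
  induction h with
  | nil q => exact ⟨0, 0, rfl, rfl, fun _ => rfl⟩
  | cons he _ ih =>
    obtain ⟨m, k, rfl, hg, hp⟩ := ih
    simp only [anbnAut, List.mem_cons, Prod.mk.injEq, List.not_mem_nil, or_false] at he
    rcases he with ⟨rfl, ⟨rfl, rfl⟩, rfl⟩ | ⟨rfl, ⟨rfl, rfl⟩, rfl⟩ | ⟨rfl, ⟨rfl, rfl⟩, rfl⟩
    · exact ⟨m + 1, k, by simp [replicate_succ], by simp [hg]; ring, fun h => absurd h (by decide)⟩
    · obtain rfl := hp rfl
      exact ⟨0, k, by simp, by simp [hg], fun _ => rfl⟩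
    · obtain rfl := hp rfl
      exact ⟨0, k + 1, by simp [replicate_succ], by simp [hg], fun _ => rfl⟩

theorem isCounterLang_anbn : IsCounterLang 1 anbn := by
  refine ⟨anbnAut, fun w => ⟨?_, ?_⟩⟩
  · rintro ⟨m, rfl⟩
    have ha : anbnAut.Path 0 0 (replicate 1 0) 1 := ZkAut.Path.single (x := some 0) (by simp)
    have hε : anbnAut.Path 0 1 [] 0 := ZkAut.Path.single (x := none) (by simp)
    have hb : anbnAut.Path 1 1 (replicate 1 1) (-1) := ZkAut.Path.single (x := some 1) (by simp)
    exact ⟨1, rfl, by simpa using ((ha.replicate_mul m).append hε).append (hb.replicate_mul m)⟩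
  · rintro ⟨q, -, h⟩
    obtain ⟨m, k, rfl, hg, -⟩ := exists_replicate_of_anbnAut_path h
    obtain rfl : m = k := by simp at hg; omega
    exact ⟨m, rfl⟩

theorem blocks_balanced_of_paths {M : ZkAut (Fin 2) 1}
    (hM : ∀ w, w ∈ anbn * anbn ↔ M.Accepts w) {r₁ r₂ r₃ f : Fin M.n} {a b c d : ℕ}
    {g₀ g₁ g₂ g₃ : Fin 1 → ℤ} (h₀ : M.Path M.start r₁ (replicate a 0) g₀)
    (h₁ : M.Path r₁ r₂ (replicate b 1) g₁) (h₂ : M.Path r₂ r₃ (replicate c 0) g₂)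
    (h₃ : M.Path r₃ f (replicate d 1) g₃) (hf : M.accept f)
    (hg : g₀ 0 + g₁ 0 + g₂ 0 + g₃ 0 = 0) (hb : 0 < b) (hc : 0 < c) : a = b ∧ c = d := by
  refine (mem_anbn_mul_anbn_iff hb hc).1 ((hM _).2 ⟨f, hf, ?_⟩)
  convert ((h₀.append h₁).append h₂).append h₃
  ext i
  fin_cases i
  simp [hg]

theorem pumped_lengths_eq_zero {M : ZkAut (Fin 2) 1} (hM : ∀ w, w ∈ anbn * anbn ↔ M.Accepts w)
    {N : ℕ} (hN : 0 < N) {r₁ r₂ r₃ f : Fin M.n} {g₀ g₁ g₂ g₃ : Fin 1 → ℤ}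
    (h₀ : M.Path M.start r₁ (replicate N 0) g₀) (h₁ : M.Path r₁ r₂ (replicate N 1) g₁)
    (h₂ : M.Path r₂ r₃ (replicate N 0) g₂) (h₃ : M.Path r₃ f (replicate N 1) g₃)
    (hf : M.accept f) (hg : g₀ 0 + g₁ 0 + g₂ 0 + g₃ 0 = 0) {c c' : Fin 1 → ℤ} {l l' : ℕ}
    (hc : M.IsPumpable M.start r₁ 0 N g₀ c l ∨ M.IsPumpable r₁ r₂ 1 N g₁ c l)
    (hc' : M.IsPumpable r₂ r₃ 0 N g₂ c' l' ∨ M.IsPumpable r₃ f 1 N g₃ c' l')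
    {t t' : ℕ} (ht : t * c 0 + t' * c' 0 = 0) : t * l = 0 ∧ t' * l' = 0 := by
  rcases hc with hc | hc <;> rcases hc' with hc' | hc'
  · have := blocks_balanced_of_paths hM (hc.path t) h₁ (hc'.path t') h₃ hf
      (by simp; linarith) (by omega) (by omega)
    omega
  · have := blocks_balanced_of_paths hM (hc.path t) h₁ h₂ (hc'.path t') hf
      (by simp; linarith) (by omega) (by omega)
    omega
  · have := blocks_balanced_of_paths hM h₀ (hc.path t) (hc'.path t') h₃ hf
      (by simp; linarith) (by omega) (by omega)
    omega
  · have := blocks_balanced_of_paths hM h₀ (hc.path t) h₂ (hc'.path t') hf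
      (by simp; linarith) (by omega) (by omega)
    omega

theorem not_isCounterLang_anbn_mul_anbn : ¬ IsCounterLang 1 (anbn * anbn) := by
  rintro ⟨M, hM⟩
  obtain ⟨B, hB⟩ := M.exists_abs_weight_le 0
  -- one more than the constant of `Path.le_of_isPumpable`
  set N := M.n * (M.n * B + 1) + 1 with hN
  have hnN : M.n < N := by have := Nat.le_mul_of_pos_right M.n (by omega : 0 < M.n * B + 1); omega
  obtain ⟨f, hf, h⟩ := (hM _).1 ((mem_anbn_mul_anbn_iff (a := N) (d := N) (by omega)
    (by omega)).2 ⟨rfl, rfl⟩)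
  obtain ⟨r₃, g₀₁₂, g₃, h₀₁₂, h₃, hsum⟩ := h.exists_split
  obtain ⟨r₂, g₀₁, g₂, h₀₁, h₂, rfl⟩ := h₀₁₂.exists_split
  obtain ⟨r₁, g₀, g₁, h₀, h₁, rfl⟩ := h₀₁.exists_split
  have hg : g₀ 0 + g₁ 0 + g₂ 0 + g₃ 0 = 0 := by simpa using (congrFun hsum 0).symm
  let P c l := ∃ c' : Fin 1 → ℤ, c' 0 = c ∧
    (M.IsPumpable M.start r₁ 0 N g₀ c' l ∨ M.IsPumpable r₁ r₂ 1 N g₁ c' l)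
  let Q c l := ∃ c' : Fin 1 → ℤ, c' 0 = c ∧
    (M.IsPumpable r₂ r₃ 0 N g₂ c' l ∨ M.IsPumpable r₃ f 1 N g₃ c' l)
  have hpump : ∀ c l c' l', P c l → Q c' l' → ∀ t t' : ℕ, t * c + t' * c' = 0 →
      t * l = 0 ∧ t' * l' = 0 := by
    rintro _ l _ l' ⟨c, rfl, hc⟩ ⟨c', rfl, hc'⟩ t t' ht
    exact pumped_lengths_eq_zero hM (by omega) h₀ h₁ h₂ h₃ hf hg hc hc' ht
  obtain ⟨c₀, l₀, hl₀, hc₀⟩ := h₀.exists_isPumpable hnN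
  obtain ⟨c₃, l₃, hl₃, hc₃⟩ := h₃.exists_isPumpable hnN
  obtain ⟨σ, hσ, hsign⟩ :=
    exists_sign_of_pumping hpump ⟨c₀, rfl, Or.inl hc₀⟩ hl₀ ⟨c₃, rfl, Or.inr hc₃⟩ hl₃
  have b₀ := h₀.le_of_isPumpable hσ.le hB fun c l h => hsign _ l (Or.inl ⟨c, rfl, Or.inl h⟩)
  have b₁ := h₁.le_of_isPumpable hσ.le hB fun c l h => hsign _ l (Or.inl ⟨c, rfl, Or.inr h⟩)
  have b₂ := h₂.le_of_isPumpable hσ.le hB fun c l h => hsign _ l (Or.inr ⟨c, rfl, Or.inl h⟩)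
  have b₃ := h₃.le_of_isPumpable hσ.le hB fun c l h => hsign _ l (Or.inr ⟨c, rfl, Or.inr h⟩)
  have : (4 * N : ℤ) ≤ 4 * (M.n * (M.n * B + 1)) := by
    linear_combination b₀ + b₁ + b₂ + b₃ + (M.n * σ) * hg
  push_cast [hN] at this
  linarith

/-- 1-counter languages are not closed under concatenation: over `Fin 2`
(with `0 = a`, `1 = b`), the language `C = { a^n b^n : n ∈ ℕ }` is 1-counter,
but the concatenation `C·C` is not 1-counter. -/
theorem one_counter_not_closed_under_concatenation :
    let C : Language (Fin 2) :=
      {w | ∃ n : ℕ, w = List.replicate n 0 ++ List.replicate n 1}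
    IsCounterLang 1 C ∧ ¬ IsCounterLang 1 (C * C) :=
  ⟨isCounterLang_anbn, not_isCounterLang_anbn_mul_anbn⟩
end

section
/- Thue–Morse square-free words: let f : {a, b, c}* → {a, b, c}* be the monoid homomorphism determined by f(a) = abc, f(b) = ac, f(c) = b. Then for every i ∈ ℕ, the word f^i(a) (the i-fold iterate of f applied to the single-letter word a) is square-free. -/
/-- The Thue–Morse substitution on the three-letter alphabet `Fin 3`
(with `0 = a`, `1 = b`, `2 = c`): `a ↦ abc`, `b ↦ ac`, `c ↦ b`. -/
def tmStep : Fin 3 → List (Fin 3)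
  | 0 => [0, 1, 2]
  | 1 => [0, 2]
  | 2 => [1]

/-- The monoid homomorphism on words over `{a, b, c}` determined by `tmStep`
(applying the substitution letter by letter and concatenating). -/
def tmSub (w : List (Fin 3)) : List (Fin 3) := w.flatMap tmStep

/-- A word is square-free if it has no nonempty contiguous subword of the
form `v v`. -/
def SquareFree (w : List (Fin 3)) : Prop :=
  ∀ v : List (Fin 3), v ≠ [] → ¬ (v ++ v) <:+: w

/-!
Encode `a, b, c` as `011, 01, 0`. This intertwines `tmSub` with the binary Thue–Morse
morphism `μ : 0 ↦ 01, 1 ↦ 10`, and makes the code of `f^i(a) c` a prefix of `μ^(i+2)(0)`.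
Since every code word starts with `0`, a square `v v` in `f^i(a)` would give an overlap
`0u0u0` in `μ^(i+2)(0)`. The Thue–Morse sequence `t` has no overlaps: one of even period `2q`
halves to one of period `q` (as `t (2n) = t n` and `t (2n + 1) = !t n`), and one of odd
period `p` would force `t` to alternate on `[i, i + p]`, contradicting `t i = t (i + p)`.
-/

def thueMorse : ℕ → Bool := Nat.binaryRec false fun b _ r => xor b r

theorem thueMorse_bit (b : Bool) (n : ℕ) : thueMorse (Nat.bit b n) = xor b (thueMorse n) :=
  Nat.binaryRec_eq b n (Or.inl rfl)

theorem thueMorse_zero : thueMorse 0 = false := Nat.binaryRec_zero _ _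

@[simp] theorem thueMorse_two_mul (n : ℕ) : thueMorse (2 * n) = thueMorse n := by
  simpa using thueMorse_bit false n

@[simp] theorem thueMorse_two_mul_add_one (n : ℕ) : thueMorse (2 * n + 1) = !thueMorse n := by
  simpa using thueMorse_bit true n

theorem thueMorse_eq_iff_div_two {a b : ℕ} (h : a % 2 = b % 2) :
    thueMorse a = thueMorse b ↔ thueMorse (a / 2) = thueMorse (b / 2) := by
  rcases Nat.even_or_odd' a with ⟨m, rfl | rfl⟩ <;>
    rcases Nat.even_or_odd' b with ⟨n, rfl | rfl⟩ <;>
    simp_all [Nat.mul_add_div]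

theorem eq_xor_bodd_of_forall_succ_eq_not (f : ℕ → Bool) {i n : ℕ}
    (h : ∀ j < n, f (i + j + 1) = !f (i + j)) : f (i + n) = xor (f i) n.bodd := by
  induction n with
  | zero => simp
  | succ n ih =>
    rw [← add_assoc, h n n.lt_succ_self, ih fun j hj => h j (by omega)]
    simp

/-- `f` has period `p` on `[i, i + 2p]`: the overlap `axaxa` with `|ax| = p` starts at `i`. -/
def HasOverlapAt {α : Type*} (f : ℕ → α) (i p : ℕ) : Prop :=
  ∀ j ≤ p, f (i + j) = f (i + p + j)

theorem HasOverlapAt.thueMorse_div_two {i q : ℕ} (h : HasOverlapAt thueMorse i (2 * q)) :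
    HasOverlapAt thueMorse (i / 2) q := by
  intro j hj
  have := (thueMorse_eq_iff_div_two (by omega)).mp (h (2 * j) (by omega))
  rwa [show (i + 2 * j) / 2 = i / 2 + j by omega,
    show (i + 2 * q + 2 * j) / 2 = i / 2 + q + j by omega] at this

theorem thueMorse_not_hasOverlapAt_of_odd {i p : ℕ} (hp : Odd p) :
    ¬ HasOverlapAt thueMorse i p := by
  intro h
  -- at odd positions `i + j`, the shifted position `i + p + j` is even
  have alternating : ∀ j < p, thueMorse (i + j + 1) = !thueMorse (i + j) := by
    intro j hj
    rcases Nat.even_or_odd' (i + j) with ⟨m, hm | hm⟩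
    · simp [hm]
    · obtain ⟨n, hn⟩ : ∃ n, i + p + j = 2 * n := ⟨m + (p + 1) / 2, by grind⟩
      rw [add_assoc i j 1, h (j + 1) hj, h j hj.le, ← add_assoc, hn]
      simp
  have hodd : p.bodd = true := by
    obtain ⟨q, rfl⟩ := hp
    rw [← Nat.bit_true_apply, Nat.bodd_bit]
  have flipped := eq_xor_bodd_of_forall_succ_eq_not thueMorse alternating
  rw [hodd, Bool.xor_true, ← add_zero (i + p), ← h 0 (Nat.zero_le p), add_zero] at flipped
  simp at flipped

theorem thueMorse_not_hasOverlapAt {i p : ℕ} (hp : 0 < p) : ¬ HasOverlapAt thueMorse i p := by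
  induction p using Nat.strong_induction_on generalizing i with
  | _ p ih =>
    rcases Nat.even_or_odd' p with ⟨q, rfl | rfl⟩
    · exact fun h => ih q (by omega) (by omega) h.thueMorse_div_two
    · exact thueMorse_not_hasOverlapAt_of_odd (odd_two_mul_add_one q)

def OverlapFree {α : Type*} (w : List α) : Prop :=
  ∀ (a : α) (x : List α), ¬ (a :: x) ++ (a :: x) ++ [a] <:+: w

theorem OverlapFree.of_infix {α : Type*} {u w : List α} (hw : OverlapFree w) (h : u <:+: w) :
    OverlapFree u :=
  fun a x hx => hw a x (hx.trans h)

theorem overlapFree_of_forall_mem_getElem? {α : Type*} {f : ℕ → α} {w : List α}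
    (hf : ∀ i p, 0 < p → ¬ HasOverlapAt f i p) (hw : ∀ n, ∀ b ∈ w[n]?, b = f n) :
    OverlapFree w := by
  rintro a x ⟨s, t, rfl⟩
  refine hf s.length (x.length + 1) x.length.succ_pos fun j hj => ?_
  obtain ⟨b, hb, hb'⟩ : ∃ b, (s ++ ((a :: x) ++ (a :: x) ++ [a]) ++ t)[s.length + j]? = some b ∧
      (s ++ ((a :: x) ++ (a :: x) ++ [a]) ++ t)[s.length + (x.length + 1) + j]? = some b := by
    rcases hj.lt_or_eq with hj | rfl
    · exact ⟨(a :: x)[j], by grind, by grind⟩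
    · exact ⟨a, by grind, by grind⟩
  rw [← hw _ b hb, ← hw _ b hb']

def tmBin (w : List Bool) : List Bool := w.flatMap fun b => [b, !b]

@[simp] theorem tmBin_nil : tmBin [] = [] := rfl

@[simp] theorem tmBin_cons (b : Bool) (w : List Bool) : tmBin (b :: w) = b :: (!b) :: tmBin w :=
  rfl

theorem tmBin_append (x y : List Bool) : tmBin (x ++ y) = tmBin x ++ tmBin y :=
  List.flatMap_append

theorem tmBin_iterate_append (n : ℕ) (x y : List Bool) :
    tmBin^[n] (x ++ y) = tmBin^[n] x ++ tmBin^[n] y := by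
  induction n generalizing x y with
  | zero => rfl
  | succ n ih => simp only [Function.iterate_succ_apply, tmBin_append, ih]

theorem getElem?_tmBin_two_mul (w : List Bool) (n : ℕ) : (tmBin w)[2 * n]? = w[n]? := by
  induction w generalizing n with
  | nil => simp
  | cons b w ih => cases n <;> simp [Nat.mul_succ, ih]

theorem getElem?_tmBin_two_mul_add_one (w : List Bool) (n : ℕ) :
    (tmBin w)[2 * n + 1]? = w[n]?.map (!·) := by
  induction w generalizing n with
  | nil => simp
  | cons b w ih => cases n <;> simp [Nat.mul_succ, ih]

def tmWord (n : ℕ) : List Bool := tmBin^[n] [false]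

theorem tmWord_succ (n : ℕ) : tmWord (n + 1) = tmBin (tmWord n) :=
  Function.iterate_succ_apply' tmBin n [false]

theorem exists_tmWord_eq_cons (n : ℕ) : ∃ w, tmWord n = false :: w := by
  induction n with
  | zero => exact ⟨[], rfl⟩
  | succ n ih =>
    obtain ⟨w, hw⟩ := ih
    exact ⟨true :: tmBin w, by rw [tmWord_succ, hw, tmBin_cons, Bool.not_false]⟩

theorem eq_thueMorse_of_mem_getElem?_tmWord {n k : ℕ} {b : Bool} (h : b ∈ (tmWord n)[k]?) :
    b = thueMorse k := by
  induction n generalizing k b with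
  | zero =>
    rcases k with _ | k
    · simpa [tmWord, thueMorse_zero, eq_comm] using h
    · simp [tmWord] at h
  | succ n ih =>
    rw [tmWord_succ] at h
    rcases Nat.even_or_odd' k with ⟨m, rfl | rfl⟩
    · rw [getElem?_tmBin_two_mul] at h
      rw [thueMorse_two_mul, ih h]
    · rw [getElem?_tmBin_two_mul_add_one, Option.mem_map] at h
      obtain ⟨c, hc, rfl⟩ := h
      rw [thueMorse_two_mul_add_one, ih hc]

theorem tmWord_overlapFree (n : ℕ) : OverlapFree (tmWord n) :=
  overlapFree_of_forall_mem_getElem? (fun _ _ => thueMorse_not_hasOverlapAt)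
    fun _ _ => eq_thueMorse_of_mem_getElem?_tmWord

def binCode : Fin 3 → List Bool
  | 0 => [false, true, true]
  | 1 => [false, true]
  | 2 => [false]

def toBinary (w : List (Fin 3)) : List Bool := w.flatMap binCode

theorem toBinary_append (x y : List (Fin 3)) : toBinary (x ++ y) = toBinary x ++ toBinary y :=
  List.flatMap_append

theorem exists_toBinary_eq_cons {w : List (Fin 3)} (hw : w ≠ []) :
    ∃ u, toBinary w = false :: u := by
  obtain ⟨a, w, rfl⟩ := List.exists_cons_of_ne_nil hw
  fin_cases a <;> exact ⟨_, rfl⟩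

theorem toBinary_tmSub (w : List (Fin 3)) : toBinary (tmSub w) = tmBin (toBinary w) := by
  simp only [toBinary, tmSub, tmBin, List.flatMap_assoc]
  congr 1
  funext a
  fin_cases a <;> rfl

theorem tmWord_add_two (n : ℕ) : tmWord (n + 2) = toBinary (tmSub^[n] [0]) ++ tmWord n := by
  have h : toBinary (tmSub^[n] [0]) = tmBin^[n] [false, true, true] :=
    (Function.Semiconj.iterate_right toBinary_tmSub n) [0]
  rw [h, tmWord, tmWord, Function.iterate_add_apply, ← tmBin_iterate_append]
  rfl

theorem squareFree_of_overlapFree_toBinary {w : List (Fin 3)}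
    (hw : OverlapFree (toBinary (w ++ [2]))) : SquareFree w := by
  rintro v hv ⟨x, y, rfl⟩
  obtain ⟨u, hu⟩ := exists_toBinary_eq_cons hv
  obtain ⟨s, hs⟩ := exists_toBinary_eq_cons (w := y ++ [2]) (by simp)
  refine hw false u ⟨toBinary x, s, ?_⟩
  simp [toBinary_append, hu, hs]

/-- Thue–Morse: every iterate `f^i(a)` of the substitution
`a ↦ abc, b ↦ ac, c ↦ b` applied to the one-letter word `a` is square-free. -/
theorem thue_morse_iterates_square_free (i : ℕ) : SquareFree (tmSub^[i] [0]) := by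
  apply squareFree_of_overlapFree_toBinary
  obtain ⟨w, hw⟩ := exists_tmWord_eq_cons i
  have hprefix : toBinary (tmSub^[i] [0] ++ [2]) <+: tmWord (i + 2) := by
    rw [tmWord_add_two, hw, toBinary_append]
    exact (List.prefix_append_right_inj _).mpr ⟨w, rfl⟩
  exact (tmWord_overlapFree (i + 2)).of_infix hprefix.isInfix
end

section
/- Swapping Lemma: if L is a counter language over a finite alphabet (i.e. L is accepted by some ℤ^k-automaton for some k ≥ 1), then there is a constant s > 0 such that every word w ∈ L of length at least 2s + 1 can be written as w = uxyz with |uxy| ≤ 2s + 1, |x| ≥ 1, |y| ≥ 1, and the word uyxz (obtained from w by interchanging x and y) also lies in L. -/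
namespace ZkAut

variable {A : Type} {k : ℕ} {M : ZkAut A k}

theorem path_append {p q r : Fin M.n} {a b : List A} {g1 g2 : Fin k → ℤ}
    (h1 : M.Path p q a g1) (h2 : M.Path q r b g2) :
    M.Path p r (a ++ b) (g1 + g2) := by
  revert h2
  induction h1 with
  | nil q => intro h2; simpa using h2
  | cons e _ ih =>
      intro h2
      rw [List.append_assoc, add_assoc]
      exact ZkAut.Path.cons e (ih h2)

theorem path_split {p r : Fin M.n} {w : List A} {g : Fin k → ℤ}
    (h : M.Path p r w g) : ∀ a b : List A, w = a ++ b →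
    ∃ q g1 g2, M.Path p q a g1 ∧ M.Path q r b g2 ∧ g = g1 + g2 := by
  induction h with
  | nil q =>
      intro a b hab
      have ha : a = [] ∧ b = [] := by
        constructor <;> [cases a; cases b] <;> simp_all
      obtain ⟨ha, hb⟩ := ha
      subst ha; subst hb
      exact ⟨q, 0, 0, .nil q, .nil q, by simp⟩
  | @cons p q r' x gg w hh e hp ih =>
      intro a b hab
      cases a with
      | nil =>
          refine ⟨p, 0, gg + hh, .nil p, ?_, by simp⟩
          simp at hab
          rw [← hab] at *
          exact ZkAut.Path.cons e hp
      | cons a0 tl =>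
          cases x with
          | none =>
              simp at hab
              obtain ⟨q1, g1, g2, P1, P2, hs⟩ := ih (a0 :: tl) b hab
              refine ⟨q1, gg + g1, g2, ?_, P2, by rw [hs, add_assoc]⟩
              have := ZkAut.Path.cons e P1
              simpa using this
          | some v =>
              simp at hab
              obtain ⟨hv, hw⟩ := hab
              obtain ⟨q1, g1, g2, P1, P2, hs⟩ := ih tl b hw
              refine ⟨q1, gg + g1, g2, ?_, P2, by rw [hs, add_assoc]⟩
              have := ZkAut.Path.cons e P1
              simpa [hv] using this

theorem aux_merge {B : Type} (L : List B) {i j : ℕ} (hij : i ≤ j) :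
    (L.take j).drop i ++ L.drop j = L.drop i := by
  conv_rhs => rw [← List.take_append_drop j L]
  rw [List.drop_append]
  congr 1
  by_cases hc : i ≤ (L.take j).length
  · have : i - (L.take j).length = 0 := by omega
    rw [this, List.drop_zero]
  · have hlen : L.length ≤ j := by
      simp [List.length_take] at hc; omega
    have hnil : L.drop j = [] := List.drop_eq_nil_of_le hlen
    simp [hnil]

theorem run {w : List A} {p r : Fin M.n} {g : Fin k → ℤ}
    (h : M.Path p r w g) : ∀ m, m ≤ w.length →
    ∃ (f : ℕ → Fin M.n) (c : ℕ → Fin k → ℤ) (d : Fin k → ℤ),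
      f 0 = p ∧
      (∀ t, t < m → M.Path (f t) (f (t+1)) ((w.take (t+1)).drop t) (c t)) ∧
      M.Path (f m) r (w.drop m) d ∧
      g = (∑ t ∈ Finset.range m, c t) + d := by
  intro m
  induction m with
  | zero =>
      intro _
      exact ⟨fun _ => p, fun _ => 0, g, rfl, by omega, by simpa using h, by simp⟩
  | succ m ih =>
      intro hm
      obtain ⟨f, c, d, hf0, hseg, htail, hsum⟩ := ih (by omega)
      have hlen : (w.take (m+1)).length = m + 1 := by
        rw [List.length_take]; omega
      have hdec : w.drop m = (w.take (m+1)).drop m ++ w.drop (m+1) := by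
        conv_lhs => rw [← List.take_append_drop (m+1) w]
        rw [List.drop_append, hlen]
        have h0 : m - (m+1) = 0 := by omega
        rw [h0, List.drop_zero]
      obtain ⟨q, g1, g2, P1, P2, hd⟩ := path_split htail _ _ hdec
      refine ⟨fun t => if t = m+1 then q else f t,
              fun t => if t = m then g1 else c t, g2, by simp [hf0], ?_, by simp [P2], ?_⟩
      · intro t ht
        by_cases htm : t = m
        · subst htm
          simpa using P1
        · have h1 : t < m := by omega
          simp only [if_neg (by omega : t ≠ m+1), if_neg (by omega : t+1 ≠ m+1),
            if_neg htm]
          exact hseg t h1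
      · rw [Finset.sum_range_succ, if_pos rfl]
        have hcc : (∑ t ∈ Finset.range m, if t = m then g1 else c t)
            = ∑ t ∈ Finset.range m, c t := by
          apply Finset.sum_congr rfl
          intro t ht
          rw [if_neg (by simp at ht; omega)]
        rw [hcc, hsum, hd]
        abel

theorem slice_path {w : List A} (f : ℕ → Fin M.n) (c : ℕ → Fin k → ℤ) (m : ℕ)
    (hseg : ∀ t, t < m → M.Path (f t) (f (t+1)) ((w.take (t+1)).drop t) (c t)) :
    ∀ i j, i ≤ j → j ≤ m →
      M.Path (f i) (f j) ((w.take j).drop i) (∑ t ∈ Finset.Ico i j, c t) := by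
  intro i j hij
  induction j, hij using Nat.le_induction with
  | base =>
      intro _
      have h1 : (w.take i).drop i = [] :=
        List.drop_eq_nil_of_le (by simp [List.length_take])
      rw [h1, Finset.Ico_self, Finset.sum_empty]
      exact .nil _
  | succ j hij ih =>
      intro hjm
      have P := path_append (ih (by omega)) (hseg j (by omega))
      have htk : w.take j = (w.take (j+1)).take j := by
        rw [List.take_take, min_eq_left (by omega)]
      have heq : (w.take j).drop i ++ (w.take (j+1)).drop j = (w.take (j+1)).drop i := by
        rw [htk]
        exact aux_merge _ hij
      rw [← heq, Finset.sum_Ico_succ_top hij]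
      exact P

theorem three_of_card {F : Finset ℕ} (h : 3 ≤ F.card) :
    ∃ i j l, i ∈ F ∧ j ∈ F ∧ l ∈ F ∧ i < j ∧ j < l := by
  have hne : F.Nonempty := Finset.card_pos.mp (by omega)
  have hiF : F.min' hne ∈ F := F.min'_mem hne
  set i := F.min' hne with hi
  have h2 : 2 ≤ (F.erase i).card := by rw [Finset.card_erase_of_mem hiF]; omega
  have hne2 : (F.erase i).Nonempty := Finset.card_pos.mp (by omega)
  have hjE : (F.erase i).min' hne2 ∈ F.erase i := Finset.min'_mem _ _
  set j := (F.erase i).min' hne2 with hj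
  have h1 : 1 ≤ ((F.erase i).erase j).card := by rw [Finset.card_erase_of_mem hjE]; omega
  obtain ⟨l, hl⟩ := Finset.card_pos.mp (by omega : 0 < ((F.erase i).erase j).card)
  have hlE : l ∈ F.erase i := Finset.mem_of_mem_erase hl
  refine ⟨i, j, l, hiF, Finset.mem_of_mem_erase hjE, Finset.mem_of_mem_erase hlE, ?_, ?_⟩
  · have hle := F.min'_le j (Finset.mem_of_mem_erase hjE)
    have hne' : j ≠ i := Finset.ne_of_mem_erase hjE
    omega
  · have hle := (F.erase i).min'_le l hlE
    have hne' : l ≠ j := Finset.ne_of_mem_erase hl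
    omega

end ZkAut

/-- Swapping Lemma: if `L` is a counter language (accepted by a
`ℤ^k`-automaton for some `k ≥ 1`), then there is a swapping length `s > 0`
such that any `w ∈ L` of length at least `2s + 1` splits as `w = u x y z`
with `|uxy| ≤ 2s + 1`, `x, y` nonempty, and `u y x z ∈ L`. -/
theorem swapping_lemma {A : Type} (L : Language A) (k : ℕ) (hk : 1 ≤ k)
    (hL : IsCounterLang k L) :
    ∃ s : ℕ, 0 < s ∧ ∀ w ∈ L, 2 * s + 1 ≤ w.length →
      ∃ u x y z : List A, w = u ++ x ++ y ++ z ∧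
        (u ++ x ++ y).length ≤ 2 * s + 1 ∧
        1 ≤ x.length ∧ 1 ≤ y.length ∧
        u ++ y ++ x ++ z ∈ L := by
  obtain ⟨M, hM⟩ := hL
  have hn : 0 < M.n := M.start.pos
  refine ⟨M.n, hn, ?_⟩
  intro w hwL hlen
  obtain ⟨qa, hacc, hpath⟩ := (hM w).mp hwL
  set m := 2 * M.n + 1 with hm
  obtain ⟨f, c, d, hf0, hseg, htail, hsum⟩ := M.run hpath m hlen
  -- pigeonhole: some state occurs ≥ 3 times among boundaries 0..m
  obtain ⟨q, -, hq⟩ := Finset.exists_lt_card_fiber_of_mul_lt_card_of_maps_to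
    (f := f) (s := Finset.range (m + 1)) (t := (Finset.univ : Finset (Fin M.n))) (n := 2)
    (fun a _ => Finset.mem_univ _) (by simp [hm]; omega)
  obtain ⟨i, j, l, hiF, hjF, hlF, hij, hjl⟩ := ZkAut.three_of_card
    (F := (Finset.range (m + 1)).filter (fun t => f t = q)) (by omega)
  simp only [Finset.mem_filter, Finset.mem_range] at hiF hjF hlF
  obtain ⟨hi_lt, hfi⟩ := hiF
  obtain ⟨hj_lt, hfj⟩ := hjF
  obtain ⟨hl_lt, hfl⟩ := hlF
  have hil : i ≤ l := by omega
  have hlm : l ≤ m := by omega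
  have hjm : j ≤ m := by omega
  set u := w.take i with hu
  set x := (w.take j).drop i with hx
  set y := (w.take l).drop j with hy
  set z := w.drop l with hz
  have P0 : M.Path M.start q u (∑ t ∈ Finset.Ico 0 i, c t) := by
    have := M.slice_path f c m hseg 0 i (Nat.zero_le _) (by omega)
    simpa [hf0, hu, hfi] using this
  have P1 : M.Path q q x (∑ t ∈ Finset.Ico i j, c t) := by
    have := M.slice_path f c m hseg i j (by omega) hjm
    rwa [hfi, hfj] at this
  have P2 : M.Path q q y (∑ t ∈ Finset.Ico j l, c t) := by
    have := M.slice_path f c m hseg j l (by omega) hlm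
    rwa [hfj, hfl] at this
  have P3 : M.Path q qa z ((∑ t ∈ Finset.Ico l m, c t) + d) := by
    have Pl := M.slice_path f c m hseg l m hlm le_rfl
    have := M.path_append Pl htail
    rw [ZkAut.aux_merge w hlm] at this
    rwa [hfl] at this
  have hsum0 : (∑ t ∈ Finset.Ico 0 i, c t) + ((∑ t ∈ Finset.Ico j l, c t) +
      ((∑ t ∈ Finset.Ico i j, c t) + ((∑ t ∈ Finset.Ico l m, c t) + d))) = 0 := by
    have h1 : (∑ t ∈ Finset.Ico 0 i, c t) + (∑ t ∈ Finset.Ico i j, c t)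
        = ∑ t ∈ Finset.Ico 0 j, c t := Finset.sum_Ico_consecutive _ (by omega) (by omega)
    have h2 : (∑ t ∈ Finset.Ico 0 j, c t) + (∑ t ∈ Finset.Ico j l, c t)
        = ∑ t ∈ Finset.Ico 0 l, c t := Finset.sum_Ico_consecutive _ (by omega) (by omega)
    have h3 : (∑ t ∈ Finset.Ico 0 l, c t) + (∑ t ∈ Finset.Ico l m, c t)
        = ∑ t ∈ Finset.Ico 0 m, c t := Finset.sum_Ico_consecutive _ (by omega) hlm
    have h4 : (∑ t ∈ Finset.Ico 0 m, c t) = ∑ t ∈ Finset.range m, c t := by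
      rw [Finset.range_eq_Ico]
    have : (∑ t ∈ Finset.Ico 0 i, c t) + ((∑ t ∈ Finset.Ico j l, c t) +
        ((∑ t ∈ Finset.Ico i j, c t) + ((∑ t ∈ Finset.Ico l m, c t) + d)))
        = (∑ t ∈ Finset.range m, c t) + d := by
      rw [← h4, ← h3, ← h2, ← h1]; abel
    rw [this, ← hsum]
  have Pswap : M.Path M.start qa (u ++ y ++ x ++ z) 0 := by
    have := M.path_append P0 (M.path_append P2 (M.path_append P1 P3))
    rw [hsum0] at this
    simpa [List.append_assoc] using this
  refine ⟨u, x, y, z, ?_, ?_, ?_, ?_, (hM _).mpr ⟨qa, hacc, Pswap⟩⟩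
  · have h1 : u ++ x = w.take j := by
      have htk : u = (w.take j).take i := by
        rw [hu, List.take_take, min_eq_left (by omega)]
      rw [htk, hx]; exact List.take_append_drop i (w.take j)
    have h2 : u ++ x ++ y = w.take l := by
      have htk : w.take j = (w.take l).take j := by
        rw [List.take_take, min_eq_left (by omega)]
      rw [h1, htk, hy]; exact List.take_append_drop j (w.take l)
    rw [h2, hz]; exact (List.take_append_drop l w).symm
  · have h2 : u ++ x ++ y = w.take l := by
      have h1 : u ++ x = w.take j := by
        have htk : u = (w.take j).take i := by
          rw [hu, List.take_take, min_eq_left (by omega)]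
        rw [htk, hx]; exact List.take_append_drop i (w.take j)
      have htk : w.take j = (w.take l).take j := by
        rw [List.take_take, min_eq_left (by omega)]
      rw [h1, htk, hy]; exact List.take_append_drop j (w.take l)
    rw [h2, List.length_take]; omega
  · rw [hx, List.length_drop, List.length_take]; omega
  · rw [hy, List.length_drop, List.length_take]; omega
end

section
/- Let k ≥ 1, let j ∈ ℤ with |j| ≥ 2, and let ε₀, …, ε_{k−1} ∈ ℤ with |ε_i| ≤ 1 for all i, and suppose that ε_{k−1} is either zero or has the same sign as j. Then |2^k·j + Σ_{i=0}^{k−1} 2^i·ε_i| ≥ 4. -/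
lemma sum_two_pow_range (k : ℕ) : ∑ i ∈ Finset.range k, (2:ℤ) ^ i = 2 ^ k - 1 := by
  induction k with
  | zero => simp
  | succ n ih => rw [Finset.sum_range_succ, ih]; ring

/-- If `k ≥ 1`, `|j| ≥ 2`, `|ε_i| ≤ 1` for all `i < k`, and `ε_{k−1}` is zero
or has the same sign as `j`, then `|2^k·j + Σ_{i<k} 2^i·ε_i| ≥ 4`. -/
theorem abs_two_pow_combination_ge_four (k : ℕ) (hk : 1 ≤ k) (j : ℤ)
    (hj : 2 ≤ |j|) (ε : ℕ → ℤ) (hε : ∀ i < k, |ε i| ≤ 1)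
    (hsign : ε (k - 1) = 0 ∨ Int.sign (ε (k - 1)) = Int.sign j) :
    4 ≤ |2 ^ k * j + ∑ i ∈ Finset.range k, 2 ^ i * ε i| := by
  obtain ⟨k, rfl⟩ : ∃ m, k = m + 1 := ⟨k - 1, (Nat.succ_pred_eq_of_pos hk).symm⟩
  simp only [Nat.add_sub_cancel] at hsign
  rw [Finset.sum_range_succ]
  set S := ∑ i ∈ Finset.range k, 2 ^ i * ε i with hS
  have hSb : |S| ≤ 2 ^ k - 1 := by
    calc |S| ≤ ∑ i ∈ Finset.range k, |2 ^ i * ε i| := Finset.abs_sum_le_sum_abs _ _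
    _ ≤ ∑ i ∈ Finset.range k, 2 ^ i := by
        apply Finset.sum_le_sum
        intro i hi
        rw [abs_mul, abs_pow, abs_two]
        have h := hε i (by simp at hi ⊢; omega)
        have hp : (0:ℤ) < 2 ^ i := pow_pos (by norm_num) i
        nlinarith
    _ = 2 ^ k - 1 := sum_two_pow_range k
  set A := 2 ^ (k + 1) * j + 2 ^ k * ε k with hA
  have hpk : (1:ℤ) ≤ 2 ^ k := one_le_pow₀ (by norm_num)
  have hAb : 2 ^ (k + 2) ≤ |A| := by
    rcases hsign with h0 | hsg
    · rw [hA, h0, mul_zero, add_zero, abs_mul, abs_pow, abs_two]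
      have : (2:ℤ) ^ (k + 2) = 2 ^ (k + 1) * 2 := by ring
      rw [this]
      have hp : (0:ℤ) < 2 ^ (k + 1) := pow_pos (by norm_num) _
      nlinarith
    · rcases lt_trichotomy j 0 with hjn | hj0 | hjp
      · have hεn : ε k < 0 := by
          have : Int.sign j = -1 := Int.sign_eq_neg_one_of_neg hjn
          rw [this, Int.sign_eq_neg_one_iff_neg] at hsg; exact hsg
        have hjle : j ≤ -2 := by rw [abs_of_neg hjn] at hj; omega
        have : A ≤ -(2 ^ (k + 2)) := by
          have h1 : 2 ^ (k + 1) * j ≤ 2 ^ (k + 1) * (-2) := by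
            apply mul_le_mul_of_nonneg_left hjle (by positivity)
          have h2 : 2 ^ k * ε k ≤ 0 := by
            apply mul_nonpos_of_nonneg_of_nonpos (by positivity) hεn.le
          have : (2:ℤ) ^ (k + 1) * (-2) = -(2 ^ (k + 2)) := by ring
          linarith [h1, h2]
        calc (2:ℤ) ^ (k + 2) ≤ -A := by linarith
        _ ≤ |A| := neg_le_abs A
      · rw [hj0] at hj; norm_num at hj
      · have hεp : 0 < ε k := by
          have : Int.sign j = 1 := Int.sign_eq_one_of_pos hjp
          rw [this, Int.sign_eq_one_iff_pos] at hsg; exact hsg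
        have hjle : 2 ≤ j := by rw [abs_of_pos hjp] at hj; omega
        have : 2 ^ (k + 2) ≤ A := by
          have h1 : 2 ^ (k + 1) * 2 ≤ 2 ^ (k + 1) * j := by
            apply mul_le_mul_of_nonneg_left hjle (by positivity)
          have h2 : (0:ℤ) ≤ 2 ^ k * ε k := by positivity
          have : (2:ℤ) ^ (k + 1) * 2 = 2 ^ (k + 2) := by ring
          linarith [h1, h2]
        exact le_trans this (le_abs_self A)
  have htri : |A| - |S| ≤ |A + S| := by
    have := abs_add_le (A + S) (-S)
    simp at this
    linarith [this]
  have h2 : (2:ℤ) ^ (k + 2) = 4 * 2 ^ k := by ring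
  have hgoal : A + S = 2 ^ (k + 1) * j + (S + 2 ^ k * ε k) := by rw [hA]; ring
  rw [← hgoal]
  linarith
end
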